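/- In Kretschmer's setting, for every α ≥ 0 the domain of the value function v satisfies dom v = {y ∈ L²[0,1] : ess sup y < ∞} = {y ∈ L²[0,1] : y₊ ∈ L^∞[0,1]}, where y₊ := max{y, 0}; in particular L^∞[0,1] ⊆ dom v, and the closure of dom v in L²[0,1] is all of L²[0,1]. -/

import Mathlib

/-! A feasible `(x, r)` bounds `y` above by `∫ x + r`, because `x ≥ 0`; conversely, if `y ≤ C`
a.e., then `(0, max C 0)` is feasible. Hence `dom v` consists of the functions that are
essentially bounded above, which contain the simple functions, and these are dense in `L²`. -/

open MeasureTheory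

/-- Lebesgue measure on `[0,1]`. -/
noncomputable def mu : Measure ℝ := volume.restrict (Set.Icc (0 : ℝ) 1)

/-- Feasibility of `(x, r)` for the primal problem with right-hand side `y`:
`(x, r) ∈ P = L²₊ × ℝ₊` and `A(x,r) − y ∈ Q = L²₊`, where
`A(x,r)(t) = ∫_t^1 x(s) ds + r`. -/
def Feas (y : ℝ → ℝ) (p : (ℝ → ℝ) × ℝ) : Prop :=
  MemLp p.1 2 mu ∧ (∀ᵐ t ∂mu, 0 ≤ p.1 t) ∧ 0 ≤ p.2 ∧
  ∀ᵐ t ∂mu, y t ≤ (∫ s in Set.Ioc t 1, p.1 s ∂mu) + p.2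

/-- The cost `c*(x,r) = ∫_0^1 t x(t) dt + α r`. -/
noncomputable def cost (α : ℝ) (p : (ℝ → ℝ) × ℝ) : ℝ :=
  (∫ t, t * p.1 t ∂mu) + α * p.2

/-- Kretschmer's value function on `Y = L²[0,1]`. -/
noncomputable def val (α : ℝ) (y : Lp ℝ 2 mu) : EReal :=
  ⨅ (p : (ℝ → ℝ) × ℝ) (_ : Feas (⇑y) p), ((cost α p : ℝ) : EReal)

namespace MeasureTheory

variable {α : Type*} [MeasurableSpace α] {μ : Measure α}

lemma MemLp.exists_ae_le_of_top {f : α → ℝ} (hf : MemLp f ⊤ μ) : ∃ C, ∀ᵐ t ∂μ, f t ≤ C :=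
  ⟨lpNorm f ⊤ μ, (ae_le_lpNorm_exponent_top hf).mono fun _ ht => (le_abs_self _).trans ht⟩

lemma exists_ae_le_iff_memLp_top_max_zero {f : α → ℝ} (hf : AEStronglyMeasurable f μ) :
    (∃ C, ∀ᵐ t ∂μ, f t ≤ C) ↔ MemLp (fun t => max (f t) 0) ⊤ μ := by
  constructor
  · rintro ⟨C, hC⟩
    refine memLp_top_of_bound (hf.sup aestronglyMeasurable_const) (max C 0) ?_
    filter_upwards [hC] with t ht
    rw [Real.norm_of_nonneg (le_max_right _ _)]
    exact max_le_max ht le_rfl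
  · intro hf_pos
    obtain ⟨C, hC⟩ := hf_pos.exists_ae_le_of_top
    exact ⟨C, hC.mono fun _ ht => (le_max_left _ _).trans ht⟩

lemma Lp.dense_setOf_exists_ae_le {p : ENNReal} [Fact (1 ≤ p)] (hp : p ≠ ⊤) :
    Dense {f : Lp ℝ p μ | ∃ C, ∀ᵐ t ∂μ, f t ≤ C} := by
  refine (Lp.simpleFunc.denseRange hp).mono ?_
  rintro _ ⟨s, rfl⟩
  obtain ⟨C, hC⟩ := (Lp.simpleFunc.toSimpleFunc s).exists_forall_norm_le
  refine ⟨C, ?_⟩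
  filter_upwards [Lp.simpleFunc.toSimpleFunc_eq_toFun s] with t ht
  rw [← ht]
  exact (le_abs_self _).trans (hC t)

end MeasureTheory

instance : IsFiniteMeasure mu := by
  constructor
  simp [mu, Real.volume_Icc]

lemma val_lt_top_iff_exists_feas (α : ℝ) (y : Lp ℝ 2 mu) :
    val α y < ⊤ ↔ ∃ p, Feas y p := by
  simp [val, iInf_lt_top, EReal.coe_lt_top]

lemma Feas.ae_le {y : ℝ → ℝ} {p : (ℝ → ℝ) × ℝ} (hp : Feas y p) :
    ∀ᵐ t ∂mu, y t ≤ (∫ s, p.1 s ∂mu) + p.2 := by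
  obtain ⟨hx, hx_nonneg, -, hy⟩ := hp
  filter_upwards [hy] with t ht
  exact ht.trans (add_le_add_left (setIntegral_le_integral (hx.integrable one_le_two) hx_nonneg) _)

lemma feas_zero_max_of_ae_le {y : ℝ → ℝ} {C : ℝ} (hC : ∀ᵐ t ∂mu, y t ≤ C) :
    Feas y (0, max C 0) := by
  refine ⟨MemLp.zero, .of_forall fun _ => le_rfl, le_max_right _ _, ?_⟩
  filter_upwards [hC] with t ht
  simpa using ht.trans (le_max_left _ _)

lemma val_lt_top_iff (α : ℝ) (y : Lp ℝ 2 mu) :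
    val α y < ⊤ ↔ ∃ C, ∀ᵐ t ∂mu, y t ≤ C := by
  rw [val_lt_top_iff_exists_feas]
  exact ⟨fun ⟨_, hp⟩ => ⟨_, hp.ae_le⟩, fun ⟨_, hC⟩ => ⟨_, feas_zero_max_of_ae_le hC⟩⟩

theorem stmt13_general (α : ℝ) :
    ({y : Lp ℝ 2 mu | val α y < ⊤} = {y : Lp ℝ 2 mu | ∃ C : ℝ, ∀ᵐ t ∂mu, y t ≤ C}) ∧
    ({y : Lp ℝ 2 mu | val α y < ⊤} =
      {y : Lp ℝ 2 mu | MemLp (fun t => max (y t) 0) ⊤ mu}) ∧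
    (∀ y : Lp ℝ 2 mu, MemLp (⇑y) ⊤ mu → val α y < ⊤) ∧
    closure {y : Lp ℝ 2 mu | val α y < ⊤} = Set.univ := by
  have dom_eq : {y : Lp ℝ 2 mu | val α y < ⊤} = {y | ∃ C : ℝ, ∀ᵐ t ∂mu, y t ≤ C} :=
    Set.ext fun y => val_lt_top_iff α y
  refine ⟨dom_eq, ?_, fun y hy => (val_lt_top_iff α y).2 hy.exists_ae_le_of_top, ?_⟩
  · rw [dom_eq]
    exact Set.ext fun y => exists_ae_le_iff_memLp_top_max_zero (Lp.aestronglyMeasurable y)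
  · rw [dom_eq]
    exact (Lp.dense_setOf_exists_ae_le (p := 2) ENNReal.ofNat_ne_top).closure_eq

/-- In Kretschmer's setting, for every `α ≥ 0`:
`dom v = {y ∈ L² : ess sup y < ∞} = {y ∈ L² : y₊ ∈ L^∞}`; in particular
`L^∞ ⊆ dom v`, and `dom v` is dense in `L²[0,1]`. -/
theorem stmt13 (α : ℝ) (hα : 0 ≤ α) :
    ({y : Lp ℝ 2 mu | val α y < ⊤} = {y : Lp ℝ 2 mu | ∃ C : ℝ, ∀ᵐ t ∂mu, y t ≤ C}) ∧
    ({y : Lp ℝ 2 mu | val α y < ⊤} =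
      {y : Lp ℝ 2 mu | MemLp (fun t => max (y t) 0) ⊤ mu}) ∧
    (∀ y : Lp ℝ 2 mu, MemLp (⇑y) ⊤ mu → val α y < ⊤) ∧
    closure {y : Lp ℝ 2 mu | val α y < ⊤} = Set.univ :=
  stmt13_general α
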